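/- For n ≥ 1, the number of inversion sequences of length n avoiding the pattern 021 equals the large Schröder number r_{n-1}, i.e., the number of Schröder paths from (0,0) to (2(n-1),0). -/

import Mathlib

/-- Steps of a Schröder path: up `(1,1)`, down `(1,-1)`, flat `(2,0)`. -/
inductive SchStep | U | D | F
deriving DecidableEq

/-- Horizontal displacement of a step. -/
def SchStep.x : SchStep → ℕ
  | .U => 1
  | .D => 1
  | .F => 2

/-- Vertical displacement of a step. -/
def SchStep.h : SchStep → ℤ
  | .U => 1
  | .D => -1
  | .F => 0

/-- `p` is a Schröder `m`-path: it goes from `(0,0)` to `(2m,0)` using steps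
`(1,1)`, `(1,-1)`, `(2,0)` and never goes below the `x`-axis. -/
def IsSchroderPath (m : ℕ) (p : List SchStep) : Prop :=
  (p.map SchStep.x).sum = 2 * m ∧ (p.map SchStep.h).sum = 0 ∧
    ∀ q : List SchStep, q <+: p → 0 ≤ (q.map SchStep.h).sum

/-!
An inversion sequence avoids 021 exactly when its positive entries weakly increase, since its
first entry is `0`. After `c` entries with largest entry `l`, the next entry is `0` or one of the
`k = c + 1 - l` values `x ∈ [l, c]`, and the new state has `k + 1`, resp. `c + 2 - x ∈ [2, k + 1]`,
such choices. So these sequences grow along the generating tree with rule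
`(k) ⟶ (k+1)(2)(3)⋯(k+1)`.

Schröder paths grow along the same tree, labelling a path by one more than the length of its
longest prefix without down steps: the children of `p` are `F :: p` and, for each `j` below the
label, `U :: p` with a down step inserted after the first `j` steps of `p`. Every path of positive
semilength arises exactly once, from the path obtained by deleting its first step and, if that
step is `U`, its first down step.
-/

open Finset

/-- Nodes at depth `m` below a node labelled `k` in the generating tree with succession rule
`(k) ⟶ (k+1)(2)(3)⋯(k+1)`. -/
def ecoCount : ℕ → ℕ → ℕ
  | 0, _ => 1
  | m + 1, k => ecoCount m (k + 1) + ∑ j ∈ range k, ecoCount m (j + 2)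

namespace SchroderPath

open SchStep

def height (p : List SchStep) : ℤ := (p.map SchStep.h).sum

def width (p : List SchStep) : ℕ := (p.map SchStep.x).sum

@[simp] lemma height_nil : height [] = 0 := rfl

@[simp] lemma height_cons (s : SchStep) (p : List SchStep) : height (s :: p) = s.h + height p := by
  simp [height]

@[simp] lemma height_append (p q : List SchStep) : height (p ++ q) = height p + height q := by
  simp [height]

@[simp] lemma width_nil : width [] = 0 := rfl

@[simp] lemma width_cons (s : SchStep) (p : List SchStep) : width (s :: p) = s.x + width p := by
  simp [width]

@[simp] lemma width_append (p q : List SchStep) : width (p ++ q) = width p + width q := by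
  simp [width]

lemma height_nonneg_of_D_notMem {p : List SchStep} (hp : D ∉ p) : 0 ≤ height p := by
  induction p with
  | nil => simp
  | cons s p ih =>
    simp only [List.mem_cons, not_or] at hp
    have : 0 ≤ s.h := by cases s <;> simp_all [SchStep.h]
    simpa using add_nonneg this (ih hp.2)

lemma eq_nil_of_width_eq_zero {p : List SchStep} (hp : width p = 0) : p = [] := by
  cases p with
  | nil => rfl
  | cons s p => cases s <;> simp [SchStep.x] at hp

lemma isSchroderPath_iff {m : ℕ} {p : List SchStep} :
    IsSchroderPath m p ↔ width p = 2 * m ∧ height p = 0 ∧ ∀ i, 0 ≤ height (p.take i) := by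
  refine and_congr_right fun _ => and_congr_right fun _ => ⟨fun h i => h _ (p.take_prefix i), ?_⟩
  intro h q hq
  rw [List.prefix_iff_eq_take.1 hq]
  exact h _

lemma forall_le_height_take_cons {c : ℤ} {s : SchStep} {p : List SchStep} :
    (∀ i, c ≤ height ((s :: p).take i)) ↔ c ≤ 0 ∧ ∀ i, c - s.h ≤ height (p.take i) := by
  refine ⟨fun h => ⟨by simpa using h 0, fun i => ?_⟩, fun ⟨h0, h⟩ i => ?_⟩
  · have := h (i + 1)
    simp only [List.take_succ_cons, height_cons] at this
    linarith
  · cases i with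
    | zero => simpa using h0
    | succ i =>
      have := h i
      simp only [List.take_succ_cons, height_cons]
      linarith

lemma forall_le_height_take_append {c : ℤ} {A B : List SchStep} (hA : D ∉ A) (hc : c ≤ 0) :
    (∀ i, c ≤ height ((A ++ B).take i)) ↔ ∀ j, c - height A ≤ height (B.take j) := by
  induction A generalizing c with
  | nil => simp
  | cons s A ih =>
    simp only [List.mem_cons, not_or] at hA
    have hs : 0 ≤ s.h := by cases s <;> simp_all [SchStep.h]
    rw [List.cons_append, forall_le_height_take_cons, ih hA.2 (by linarith)]
    simp only [hc, true_and, height_cons, sub_sub]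

lemma isSchroderPath_F_cons_iff {m : ℕ} {p : List SchStep} :
    IsSchroderPath (m + 1) (F :: p) ↔ IsSchroderPath m p := by
  simp only [isSchroderPath_iff, width_cons, height_cons, forall_le_height_take_cons, SchStep.x,
    SchStep.h, zero_add, sub_zero, le_refl, true_and]
  exact and_congr_left' (by omega)

lemma isSchroderPath_U_cons_iff {m : ℕ} {A B : List SchStep} (hA : D ∉ A) :
    IsSchroderPath (m + 1) (U :: (A ++ D :: B)) ↔ IsSchroderPath m (A ++ B) := by
  have hA_nonneg := height_nonneg_of_D_notMem hA
  rw [isSchroderPath_iff, isSchroderPath_iff, forall_le_height_take_cons,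
    forall_le_height_take_append hA (by simp [SchStep.h]), forall_le_height_take_cons,
    forall_le_height_take_append hA le_rfl]
  simp only [width_cons, width_append, height_cons, height_append, SchStep.x, SchStep.h]
  constructor
  · rintro ⟨hw, hh, -, -, h⟩
    exact ⟨by omega, by omega, fun j => by linarith [h j]⟩
  · rintro ⟨hw, hh, h⟩
    exact ⟨by omega, by omega, by norm_num, by linarith, fun j => by linarith [h j]⟩

def lead (p : List SchStep) : ℕ := (p.takeWhile (· != D)).length

def child (p : List SchStep) : ℕ → List SchStep
  | 0 => F :: p
  | j + 1 => U :: (p.take j ++ D :: p.drop j)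

def parent : List SchStep → List SchStep
  | U :: q => q.erase D
  | q => q.tail

lemma lead_le_length (p : List SchStep) : lead p ≤ p.length :=
  (List.takeWhile_prefix _).length_le

lemma D_notMem_take_of_le_lead {p : List SchStep} {j : ℕ} (hj : j ≤ lead p) : D ∉ p.take j := by
  have hprefix : p.takeWhile (· != D) = p.take (lead p) :=
    List.prefix_iff_eq_take.1 (List.takeWhile_prefix _)
  have htake : p.take j = (p.takeWhile (· != D)).take j := by
    rw [hprefix, List.take_take, min_eq_left hj]
  intro hD
  rw [htake] at hD
  simpa using List.mem_takeWhile_imp (List.mem_of_mem_take hD)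

lemma lead_append_of_D_notMem {A : List SchStep} (hA : D ∉ A) (B : List SchStep) :
    lead (A ++ B) = A.length + lead B := by
  rw [lead, List.takeWhile_append_of_pos fun s hs => by simpa using ne_of_mem_of_not_mem hs hA]
  simp [lead]

lemma lead_child_zero (p : List SchStep) : lead (child p 0) = lead p + 1 := by
  simpa [add_comm, child] using lead_append_of_D_notMem (A := [F]) (by simp) p

lemma lead_child_succ {p : List SchStep} {j : ℕ} (hj : j ≤ lead p) :
    lead (child p (j + 1)) = j + 1 := by
  have hA : D ∉ U :: p.take j := by simp [D_notMem_take_of_le_lead hj]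
  rw [child, ← List.cons_append, lead_append_of_D_notMem hA]
  simp [lead, (lead_le_length p).trans' hj]

lemma parent_child {p : List SchStep} {o : ℕ} (ho : o ≤ lead p + 1) : parent (child p o) = p := by
  cases o with
  | zero => rfl
  | succ j =>
    rw [child, parent, List.erase_append_right _ (D_notMem_take_of_le_lead (by omega)),
      List.erase_cons_head, List.take_append_drop]

lemma child_injOn (p : List SchStep) : Set.InjOn (child p) {o | o ≤ lead p + 1} := by
  rintro (_ | i) hi (_ | j) hj h
  · rfl
  · simp [child] at h
  · simp [child] at h
  · have := congrArg lead h
    rw [lead_child_succ (Nat.le_of_succ_le_succ hi), lead_child_succ (Nat.le_of_succ_le_succ hj)]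
      at this
    omega

lemma isSchroderPath_child_iff {m : ℕ} {p : List SchStep} {o : ℕ} (ho : o ≤ lead p + 1) :
    IsSchroderPath (m + 1) (child p o) ↔ IsSchroderPath m p := by
  cases o with
  | zero => exact isSchroderPath_F_cons_iff
  | succ j =>
    rw [child, isSchroderPath_U_cons_iff (D_notMem_take_of_le_lead (by omega)),
      List.take_append_drop]

lemma exists_child_parent_eq {m : ℕ} {q : List SchStep} (hq : IsSchroderPath (m + 1) q) :
    ∃ o ≤ lead (parent q) + 1, child (parent q) o = q := by
  obtain ⟨hw, hh, hpre⟩ := isSchroderPath_iff.1 hq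
  match q, hw, hh, hpre with
  | [], hw, _, _ => simp at hw
  | D :: r, _, _, hpre => simpa [SchStep.h] using hpre 1
  | F :: r, _, _, _ => exact ⟨0, by omega, rfl⟩
  | U :: r, _, hh, _ =>
    have hD : D ∈ r := by
      by_contra hD
      have := height_nonneg_of_D_notMem hD
      simp only [height_cons, SchStep.h] at hh
      omega
    obtain ⟨A, B, hA, rfl, herase⟩ := List.exists_erase_eq hD
    refine ⟨A.length + 1, ?_, ?_⟩
    · rw [parent, herase, lead_append_of_D_notMem hA]
      omega
    · rw [parent, herase, child, List.take_left, List.drop_left]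

def paths : ℕ → Finset (List SchStep)
  | 0 => {[]}
  | m + 1 => (paths m).biUnion fun p => (range (lead p + 2)).image (child p)

lemma mem_paths {m : ℕ} {q : List SchStep} : q ∈ paths m ↔ IsSchroderPath m q := by
  induction m generalizing q with
  | zero =>
    simp only [paths, mem_singleton, isSchroderPath_iff]
    refine ⟨by rintro rfl; simp, fun ⟨hw, _⟩ => eq_nil_of_width_eq_zero hw⟩
  | succ m ih =>
    simp only [paths, mem_biUnion, mem_image, mem_range, ih]
    constructor
    · rintro ⟨p, hp, o, ho, rfl⟩
      exact (isSchroderPath_child_iff (by omega)).2 hp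
    · intro hq
      obtain ⟨o, ho, hchild⟩ := exists_child_parent_eq hq
      refine ⟨parent q, (isSchroderPath_child_iff ho).1 (by rwa [hchild]), o, by omega, hchild⟩

lemma sum_paths_succ {M : Type*} [AddCommMonoid M] (m : ℕ) (g : List SchStep → M) :
    ∑ q ∈ paths (m + 1), g q = ∑ p ∈ paths m, ∑ o ∈ range (lead p + 2), g (child p o) := by
  rw [paths, sum_biUnion]
  · refine sum_congr rfl fun p _ => sum_image fun i hi j hj => child_injOn p ?_ ?_
    · simpa [Nat.lt_succ_iff] using hi
    · simpa [Nat.lt_succ_iff] using hj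
  · intro p _ p' _ hne
    simp only [Function.onFun, disjoint_left, mem_image, mem_range, not_exists, not_and]
    rintro _ ⟨o, ho, rfl⟩ o' ho' h
    have := congrArg parent h
    rw [parent_child (by omega), parent_child (by omega)] at this
    exact hne this.symm

lemma ecoCount_succ_lead (m : ℕ) (p : List SchStep) :
    ecoCount (m + 1) (lead p + 1) =
      ∑ o ∈ range (lead p + 2), ecoCount m (lead (child p o) + 1) := by
  rw [sum_range_succ', lead_child_zero, ecoCount, add_comm]
  congr 1
  exact sum_congr rfl fun j hj => by rw [lead_child_succ (by simpa [Nat.lt_succ_iff] using hj)]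

lemma sum_ecoCount_lead (m j : ℕ) :
    ∑ p ∈ paths j, ecoCount m (lead p + 1) = (paths (j + m)).card := by
  induction m generalizing j with
  | zero => simp [ecoCount]
  | succ m ih =>
    calc ∑ p ∈ paths j, ecoCount (m + 1) (lead p + 1)
        = ∑ q ∈ paths (j + 1), ecoCount m (lead q + 1) := by
          simp only [ecoCount_succ_lead, sum_paths_succ]
      _ = (paths (j + (m + 1))).card := by rw [ih, add_right_comm, add_assoc]

lemma card_paths (m : ℕ) : (paths m).card = ecoCount m 1 := by
  simpa [paths, lead] using (sum_ecoCount_lead m 0).symm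

end SchroderPath

/-- `e` can follow an 021-avoiding inversion sequence of length `c` whose largest entry is `l`
(`l = 1` if all its entries vanish). -/
def IsInvTail (c l : ℕ) {m : ℕ} (e : Fin m → ℕ) : Prop :=
  (∀ i, e i ≤ c + i) ∧ (∀ i j, i < j → e j ≠ 0 → e i ≤ e j) ∧ ∀ i, e i ≠ 0 → l ≤ e i

def invTails : (m : ℕ) → ℕ → ℕ → Finset (Fin m → ℕ)
  | 0, _, _ => {![]}
  | m + 1, c, l =>
    (insert 0 (Icc l c)).biUnion fun x => (invTails m (c + 1) (max l x)).image (Fin.cons x)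

lemma isInvTail_cons {c l m x : ℕ} {t : Fin m → ℕ} :
    IsInvTail c l (Fin.cons x t : Fin (m + 1) → ℕ) ↔
      (x = 0 ∨ l ≤ x ∧ x ≤ c) ∧ IsInvTail (c + 1) (max l x) t := by
  simp only [IsInvTail, Fin.forall_fin_succ, Fin.cons_zero, Fin.cons_succ, Fin.val_zero,
    Fin.val_succ, Fin.succ_pos, Fin.succ_lt_succ_iff, Fin.not_lt_zero, max_le_iff, add_zero,
    false_imp_iff, true_imp_iff, true_and, ← add_assoc, add_right_comm c 1]
  constructor
  · rintro ⟨⟨hx, hb⟩, ⟨hxt, hmono⟩, hlx, hl⟩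
    exact ⟨by omega, hb, hmono, fun i hi => ⟨hl i hi, hxt i hi⟩⟩
  · rintro ⟨hx, hb, hmono, hl⟩
    exact ⟨⟨by omega, hb⟩, ⟨fun i hi => (hl i hi).2, hmono⟩, by omega, fun i hi => (hl i hi).1⟩

lemma mem_invTails {m c l : ℕ} {e : Fin m → ℕ} : e ∈ invTails m c l ↔ IsInvTail c l e := by
  induction m generalizing c l with
  | zero => simp [invTails, IsInvTail, Subsingleton.elim e ![]]
  | succ m ih =>
    obtain ⟨x, t, rfl⟩ : ∃ x t, e = Fin.cons x t := ⟨e 0, Fin.tail e, (Fin.cons_self_tail e).symm⟩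
    simp only [invTails, mem_biUnion, mem_image, Fin.cons_inj, mem_insert, mem_Icc, ih,
      isInvTail_cons]
    constructor
    · rintro ⟨_, hx, _, ht, rfl, rfl⟩
      exact ⟨hx, ht⟩
    · rintro ⟨hx, ht⟩
      exact ⟨x, hx, t, ht, rfl, rfl⟩

lemma Finset.sum_Icc_reflect {M : Type*} [AddCommMonoid M] (f : ℕ → M) (l c : ℕ) :
    ∑ x ∈ Icc l c, f (c - x) = ∑ j ∈ range (c + 1 - l), f j := by
  rw [← Ico_add_one_right_eq_Icc, sum_Ico_reflect f l le_rfl, Nat.sub_self, range_eq_Ico]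

lemma card_invTails {m c l : ℕ} (hl : 1 ≤ l) (hlc : l ≤ c + 1) :
    (invTails m c l).card = ecoCount m (c + 1 - l) := by
  induction m generalizing c l with
  | zero => rfl
  | succ m ih =>
    have h0 : (0 : ℕ) ∉ Icc l c := by rw [mem_Icc]; omega
    have hx : ∀ x ∈ Icc l c, (invTails m (c + 1) (max l x)).card = ecoCount m (c - x + 2) := by
      intro x hx
      rw [mem_Icc] at hx
      rw [max_eq_right hx.1, ih (by omega) (by omega)]
      congr 1
      omega
    rw [invTails, card_biUnion, sum_insert h0]
    · simp only [card_image_of_injective _ (Fin.cons_right_injective _)]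
      rw [sum_congr rfl hx, max_eq_left (Nat.zero_le l), ih hl (by omega),
        sum_Icc_reflect (fun j => ecoCount m (j + 2)), ecoCount, Nat.sub_add_comm hlc]
    · intro x _ y _ hxy
      simp only [Function.onFun, disjoint_left, mem_image, not_exists, not_and]
      rintro _ ⟨t, -, rfl⟩ t' - h
      exact hxy (Fin.cons_inj.1 h).1.symm

lemma not_exists_021_iff {n : ℕ} {e : Fin n → ℕ} (he : ∀ i : Fin n, e i ≤ (i : ℕ)) :
    (¬ ∃ i j k : Fin n, i < j ∧ j < k ∧ e i < e k ∧ e k < e j) ↔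
      ∀ i j, i < j → e j ≠ 0 → e i ≤ e j := by
  constructor
  · intro h i j hij hj
    by_contra hlt
    have hi : 0 < (i : ℕ) := by have := he i; omega
    have h0 : e ⟨0, by omega⟩ = 0 := by simpa using he ⟨0, by omega⟩
    exact h ⟨⟨0, by omega⟩, i, j, Fin.lt_def.2 hi, hij, by omega, by omega⟩
  · rintro h ⟨i, j, k, -, hjk, hik, hkj⟩
    exact absurd (h j k hjk (by omega)) (by omega)

theorem inv_avoid_021_eq_schroder_general (n : ℕ) :
    Set.ncard {e : Fin n → ℕ | (∀ i : Fin n, e i ≤ (i : ℕ)) ∧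
      ¬ ∃ i j k : Fin n, i < j ∧ j < k ∧ e i < e k ∧ e k < e j} =
    Set.ncard {p : List SchStep | IsSchroderPath (n - 1) p} := by
  have hinv : {e : Fin n → ℕ | (∀ i : Fin n, e i ≤ (i : ℕ)) ∧
      ¬ ∃ i j k : Fin n, i < j ∧ j < k ∧ e i < e k ∧ e k < e j} = invTails n 0 1 := by
    ext e
    simp only [Set.mem_ofPred_eq, mem_coe, mem_invTails, IsInvTail, zero_add]
    exact ⟨fun ⟨he, h⟩ => ⟨he, (not_exists_021_iff he).1 h, fun i hi => by omega⟩,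
      fun ⟨he, h, _⟩ => ⟨he, (not_exists_021_iff he).2 h⟩⟩
  have hsch : {p | IsSchroderPath (n - 1) p} = SchroderPath.paths (n - 1) :=
    Set.ext fun _ => SchroderPath.mem_paths.symm
  rw [hinv, hsch, Set.ncard_coe_finset, Set.ncard_coe_finset, card_invTails le_rfl le_rfl,
    SchroderPath.card_paths]
  cases n <;> simp [ecoCount]

/-- For `n ≥ 1`, the number of inversion sequences of length `n` avoiding the
pattern 021 equals the large Schröder number `r_{n-1}`, the number of
Schröder `(n-1)`-paths. -/
theorem inv_avoid_021_eq_schroder (n : ℕ) (hn : 1 ≤ n) :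
    Set.ncard {e : Fin n → ℕ | (∀ i : Fin n, e i ≤ (i : ℕ)) ∧
      ¬ ∃ i j k : Fin n, i < j ∧ j < k ∧ e i < e k ∧ e k < e j} =
    Set.ncard {p : List SchStep | IsSchroderPath (n - 1) p} :=
  inv_avoid_021_eq_schroder_general n
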